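/- For every integer d ≥ n and every σ ∈ S_n, the series Σ_{r=0}^∞ (−1)^r · h_r(J_1,…,J_n)(σ) / d^{n+r} converges in ℂ and its sum equals the coefficient of σ in the inverse of ∏_{i=1}^n (d·1 + J_i) in the group algebra A. In other words, the coefficients in the 1/d-expansion of the Weingarten function are a_r = (−1)^r h_r(J_1,…,J_n). -/

import Mathlib

/-!
Because the Jucys–Murphy elements commute, the complete homogeneous sums satisfy
`h_{r+1}(s ∪ {a}) = h_{r+1}(s) + J_a h_r(s ∪ {a})`. Read on the series
`S_m(s) = Σ_r (-1)^r h_r(s) / d^(m+r)`, this recursion says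
`(d + J_a) S_{m+1}(s ∪ {a}) = S_m(s)`, so multiplying by the factors of `∏ (d + J_i)` one at a
time reduces the full series to `S_0(∅) = 1`. Convergence is taken in the ℓ¹ norm of the group
algebra, where `‖J_i‖ ≤ i - 1 < d`, and follows from the same recursion:
`Σ_r ‖h_r(s ∪ {a})‖ d^(-r)` is at most `(1 - ‖J_a‖ / d)⁻¹ Σ_r ‖h_r(s)‖ d^(-r)`.
-/

/-- The Jucys–Murphy element `J_{i+1}` (1-based: `J_1 = 0`,
`J_i = (1,i) + ⋯ + (i-1,i)`) in the complex group algebra of `S_n`. -/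
noncomputable def jm (n : ℕ) (i : Fin n) : MonoidAlgebra ℂ (Equiv.Perm (Fin n)) :=
  ∑ k ∈ Finset.univ.filter (fun k => k < i),
    MonoidAlgebra.of ℂ (Equiv.Perm (Fin n)) (Equiv.swap k i)

/-- The product `∏_{i=1}^n (d·1 + J_i)` in the group algebra (the JM elements commute,
so the order of the factors is immaterial; we multiply them in increasing order). -/
noncomputable def prodDJ (n : ℕ) (d : ℂ) : MonoidAlgebra ℂ (Equiv.Perm (Fin n)) :=
  ((List.finRange n).map fun i =>
    d • (1 : MonoidAlgebra ℂ (Equiv.Perm (Fin n))) + jm n i).prod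

/-- The `r`-th complete homogeneous symmetric polynomial evaluated at the Jucys–Murphy
elements: `h_r(J_1,…,J_n) = Σ_{i_1 ≤ ⋯ ≤ i_r} J_{i_1} ⋯ J_{i_r}`, the sum running over
all multisets of size `r` (the JM elements commute, so the order of the factors is
immaterial; we multiply them in increasing order). -/
noncomputable def hJM (n r : ℕ) : MonoidAlgebra ℂ (Equiv.Perm (Fin n)) :=
  ∑ m : Sym (Fin n) r, ((Multiset.sort (m : Multiset (Fin n)) (· ≤ ·)).map (jm n)).prod

namespace MonoidAlgebra

section

variable {𝕜 G : Type*} [NormedField 𝕜] [Fintype G]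

noncomputable instance : Norm (MonoidAlgebra 𝕜 G) := ⟨fun x => ∑ g, ‖x.coeff g‖⟩

theorem norm_def (x : MonoidAlgebra 𝕜 G) : ‖x‖ = ∑ g, ‖x.coeff g‖ := rfl

theorem norm_coeff_le (x : MonoidAlgebra 𝕜 G) (g : G) : ‖x.coeff g‖ ≤ ‖x‖ :=
  Finset.single_le_sum (fun h _ => norm_nonneg (x.coeff h)) (Finset.mem_univ g)

theorem normedSpaceCore : NormedSpace.Core 𝕜 (MonoidAlgebra 𝕜 G) where
  norm_nonneg x := Finset.sum_nonneg fun g _ => norm_nonneg (x.coeff g)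
  norm_eq_zero_iff x := by
    simp only [norm_def, Finset.sum_eq_zero_iff_of_nonneg (fun g _ => norm_nonneg (x.coeff g)),
      Finset.mem_univ, true_implies, norm_eq_zero, ← coeff_eq_zero, Finsupp.ext_iff,
      Finsupp.coe_zero, Pi.zero_apply]
  norm_smul c x := by
    simp only [norm_def, coeff_smul_apply, smul_eq_mul, norm_mul, Finset.mul_sum]
  norm_triangle x y := by
    simp only [norm_def, ← Finset.sum_add_distrib, coeff_add, Finsupp.add_apply]
    exact Finset.sum_le_sum fun g _ => norm_add_le _ _

noncomputable instance : NormedAddCommGroup (MonoidAlgebra 𝕜 G) := .ofCore normedSpaceCore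

noncomputable instance : NormedSpace 𝕜 (MonoidAlgebra 𝕜 G) := .ofCore normedSpaceCore

theorem hasSum_coeff {ι : Type*} {f : ι → MonoidAlgebra 𝕜 G} {S : MonoidAlgebra 𝕜 G}
    (h : HasSum f S) (g : G) : HasSum (fun i => (f i).coeff g) (S.coeff g) :=
  h.map ((Finsupp.applyAddHom g).comp (coeffAddEquiv (R := 𝕜) (M := G)).toAddMonoidHom)
    (AddMonoidHomClass.continuous_of_bound _ 1 fun x => by simpa using norm_coeff_le x g)

theorem norm_single_one (g : G) : ‖single g (1 : 𝕜)‖ = 1 := by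
  classical
  rw [norm_def, Finset.sum_eq_single g (fun h _ hh => by simp [coeff_single, hh]) (by simp)]
  simp [coeff_single]

variable [Group G]

theorem norm_mul_le_mul_norm (x y : MonoidAlgebra 𝕜 G) : ‖x * y‖ ≤ ‖x‖ * ‖y‖ := by
  have hcoeff (g : G) : (x * y).coeff g = ∑ h, x.coeff h * y.coeff (h⁻¹ * g) := by
    rw [coeff_mul_apply_left, Finsupp.sum_fintype _ _ fun h => zero_mul _]
  calc ‖x * y‖ ≤ ∑ g, ∑ h, ‖x.coeff h‖ * ‖y.coeff (h⁻¹ * g)‖ := by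
        simp only [norm_def, hcoeff, ← norm_mul]
        exact Finset.sum_le_sum fun g _ => norm_sum_le _ _
    _ = ∑ h, ‖x.coeff h‖ * ∑ g, ‖y.coeff (h⁻¹ * g)‖ := by
        rw [Finset.sum_comm]; simp only [Finset.mul_sum]
    _ = ‖x‖ * ‖y‖ := by
        simp only [norm_def, Finset.sum_mul]
        exact Finset.sum_congr rfl fun h _ =>
          congrArg _ (Equiv.sum_comp (Equiv.mulLeft h⁻¹) fun g => ‖y.coeff g‖)

noncomputable instance : NormedRing (MonoidAlgebra 𝕜 G) where
  __ := (inferInstance : NormedAddCommGroup (MonoidAlgebra 𝕜 G))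
  __ := (inferInstance : Ring (MonoidAlgebra 𝕜 G))
  norm_mul_le := norm_mul_le_mul_norm

noncomputable instance : NormedAlgebra 𝕜 (MonoidAlgebra 𝕜 G) where
  norm_smul_le := norm_smul_le

end

instance {𝕜 G : Type*} [NontriviallyNormedField 𝕜] [CompleteSpace 𝕜] [Fintype G] :
    CompleteSpace (MonoidAlgebra 𝕜 G) :=
  FiniteDimensional.complete 𝕜 _

end MonoidAlgebra

section CompleteHomogeneous

variable {ι R : Type*} [LinearOrder ι] [Semiring R] (x : ι → R)

noncomputable def completeHomogeneous (s : Finset ι) (r : ℕ) : R :=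
  ∑ μ ∈ s.sym r, ((Multiset.sort (μ : Multiset ι) (· ≤ ·)).map x).prod

@[simp]
theorem completeHomogeneous_zero (s : Finset ι) : completeHomogeneous x s 0 = 1 := by
  simp [completeHomogeneous, Finset.sym_zero, show ((∅ : Sym ι 0) : Multiset ι) = 0 from rfl]

@[simp]
theorem completeHomogeneous_empty_succ (r : ℕ) : completeHomogeneous x ∅ (r + 1) = 0 := by
  simp [completeHomogeneous]

variable {x}

theorem commute_completeHomogeneous {a : R} (ha : ∀ i, Commute a (x i)) (s : Finset ι)
    (r : ℕ) : Commute a (completeHomogeneous x s r) :=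
  .sum_right _ _ _ fun _ _ => .list_prod_right _ _ fun _ hy => by
    obtain ⟨i, -, rfl⟩ := List.mem_map.mp hy
    exact ha i

theorem prod_map_sort_cons (hx : ∀ i j, Commute (x i) (x j)) (a : ι) (μ : Multiset ι) :
    ((Multiset.sort (a ::ₘ μ) (· ≤ ·)).map x).prod =
      x a * ((Multiset.sort μ (· ≤ ·)).map x).prod := by
  have hperm :
      (Multiset.sort (a ::ₘ μ) (· ≤ ·)).Perm (a :: Multiset.sort μ (· ≤ ·)) := by
    rw [← Multiset.coe_eq_coe, Multiset.sort_eq, ← Multiset.cons_coe, Multiset.sort_eq]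
  rw [(hperm.map x).prod_eq' (List.pairwise_map.mpr (List.pairwise_of_forall fun i j => hx i j)),
    List.map_cons, List.prod_cons]

theorem completeHomogeneous_insert_succ (hx : ∀ i j, Commute (x i) (x j)) {a : ι} {s : Finset ι}
    (ha : a ∉ s) (r : ℕ) :
    completeHomogeneous x (insert a s) (r + 1) =
      completeHomogeneous x s (r + 1) + x a * completeHomogeneous x (insert a s) r := by
  have hwithout : Finset.filter (a ∉ ·) ((insert a s).sym (r + 1)) = s.sym (r + 1) := by
    ext μ
    simp only [Finset.mem_filter, Finset.mem_sym_iff, Finset.mem_insert]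
    exact ⟨fun ⟨h, haμ⟩ b hb => (h b hb).resolve_left (ne_of_mem_of_not_mem hb haμ),
      fun h => ⟨fun b hb => .inr (h b hb), fun haμ => ha (h a haμ)⟩⟩
  have hwith : Finset.filter (a ∈ ·) ((insert a s).sym (r + 1)) =
      ((insert a s).sym r).image (a ::ₛ ·) := by
    ext μ
    simp only [Finset.mem_filter, Finset.mem_sym_iff, Finset.mem_image]
    constructor
    · rintro ⟨h, haμ⟩
      exact ⟨μ.erase a haμ, fun b hb => h b (Multiset.mem_of_mem_erase hb),
        Sym.cons_erase haμ⟩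
    · rintro ⟨ν, hν, rfl⟩
      refine ⟨fun b hb => ?_, Sym.mem_cons_self a ν⟩
      rcases Sym.mem_cons.mp hb with rfl | hb
      exacts [Finset.mem_insert_self _ _, hν b hb]
  rw [completeHomogeneous, ← Finset.sum_filter_not_add_sum_filter _ (a ∈ ·), hwithout, hwith,
    Finset.sum_image fun _ _ _ _ => (Sym.cons_inj_right a _ _).mp, completeHomogeneous,
    completeHomogeneous, Finset.mul_sum]
  congr 1
  refine Finset.sum_congr rfl fun ν _ => ?_
  rw [Sym.coe_cons, prod_map_sort_cons hx]

end CompleteHomogeneous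

theorem Commute.smul_one_add_left {𝕜 R : Type*} [CommSemiring 𝕜] [Semiring R] [Algebra 𝕜 R]
    {a b : R} (h : Commute a b) {d : 𝕜} : Commute (d • 1 + a) b :=
  ((Commute.one_left b).smul_left d).add_left h

section Expansion

variable {𝕜 ι R : Type*} [LinearOrder ι] {x : ι → R}

section Topological

variable [Field 𝕜] [Ring R] [Algebra 𝕜 R] [TopologicalSpace R] [IsTopologicalRing R]
  [ContinuousConstSMul 𝕜 R]

theorem hasSum_completeHomogeneous_of_insert (hx : ∀ i j, Commute (x i) (x j)) {a : ι}
    {s : Finset ι} (ha : a ∉ s) {d : 𝕜} (hd : d ≠ 0) {m : ℕ} {S : R}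
    (hS : HasSum (fun r => ((-1) ^ r / d ^ (m + 1 + r)) • completeHomogeneous x (insert a s) r)
      S) :
    HasSum (fun r => ((-1) ^ r / d ^ (m + r)) • completeHomogeneous x s r)
      ((d • 1 + x a) * S) := by
  set h' := completeHomogeneous x (insert a s)
  have hscale (r : ℕ) : d * ((-1) ^ r / d ^ (m + 1 + r)) = (-1) ^ r / d ^ (m + r) := by
    rw [add_right_comm, pow_succ]; field_simp
  have hmain : HasSum (fun r => ((-1) ^ r / d ^ (m + r)) • h' r) (d • S) := by
    simpa only [smul_smul, hscale] using hS.const_smul d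
  have hcorr : HasSum (fun r => ((-1) ^ r / d ^ (m + 1 + r)) • (x a * h' r)) (x a * S) := by
    simpa only [mul_smul_comm] using hS.mul_left (x a)
  have hshift (r : ℕ) : ((-1) ^ (r + 1) / d ^ (m + (r + 1))) • completeHomogeneous x s (r + 1) =
      ((-1) ^ (r + 1) / d ^ (m + (r + 1))) • h' (r + 1) +
        ((-1) ^ r / d ^ (m + 1 + r)) • (x a * h' r) := by
    rw [eq_sub_of_add_eq (completeHomogeneous_insert_succ hx ha r).symm, smul_sub,
      sub_eq_add_neg, ← neg_smul, add_assoc m 1 r, add_comm 1 r, pow_succ, mul_neg_one, neg_div,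
      neg_neg]
  refine (hasSum_nat_add_iff' 1).mp ?_
  convert ((hasSum_nat_add_iff' 1).mpr hmain).add hcorr using 1
  · exact funext hshift
  · simp only [add_mul, smul_mul_assoc, one_mul, Finset.range_one, Finset.sum_singleton, pow_zero,
      add_zero, one_div, completeHomogeneous_zero, h']
    abel

end Topological

variable [NormedField 𝕜] [NormedRing R] [NormedAlgebra 𝕜 R]

theorem summable_norm_completeHomogeneous_mul_pow (hx : ∀ i j, Commute (x i) (x j)) {t : ℝ}
    (ht : 0 ≤ t) (s : Finset ι) (hs : ∀ i ∈ s, ‖x i‖ * t < 1) :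
    Summable fun r => ‖completeHomogeneous x s r‖ * t ^ r := by
  induction s using Finset.induction_on with
  | empty =>
    refine summable_of_ne_finset_zero (s := {0}) fun r hr => ?_
    obtain ⟨r, rfl⟩ := Nat.exists_eq_succ_of_ne_zero (Finset.notMem_singleton.mp hr)
    simp
  | insert a s ha ih =>
    set f := fun r => ‖completeHomogeneous x (insert a s) r‖ * t ^ r
    set g := fun r => ‖completeHomogeneous x s r‖ * t ^ r
    set q := ‖x a‖ * t
    have hq : q < 1 := hs a (Finset.mem_insert_self a s)
    have hg : Summable g := ih fun i hi => hs i (Finset.mem_insert_of_mem hi)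
    have hf0 (r : ℕ) : 0 ≤ f r := by positivity
    have hrec (r : ℕ) : f (r + 1) ≤ g (r + 1) + q * f r := by
      calc f (r + 1)
          ≤ (‖completeHomogeneous x s (r + 1)‖ +
              ‖x a‖ * ‖completeHomogeneous x (insert a s) r‖) * t ^ (r + 1) := by
            simp only [f, completeHomogeneous_insert_succ hx ha]
            gcongr
            exact (norm_add_le _ _).trans (add_le_add_right (norm_mul_le _ _) _)
        _ = g (r + 1) + q * f r := by simp only [f, g, q]; ring
    have hpartial (N : ℕ) :
        ∑ r ∈ Finset.range N, f r ≤ (∑' r, g r) + q * ∑ r ∈ Finset.range N, f r := by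
      have hg0 (r : ℕ) : 0 ≤ g r := by positivity
      cases N with
      | zero => simpa using tsum_nonneg hg0
      | succ N =>
        calc ∑ r ∈ Finset.range (N + 1), f r
            = ∑ r ∈ Finset.range N, f (r + 1) + f 0 := Finset.sum_range_succ' _ _
          _ ≤ ∑ r ∈ Finset.range N, (g (r + 1) + q * f r) + g 0 := by
            gcongr with r
            · exact hrec r
            · simp [f, g]
          _ = ∑ r ∈ Finset.range (N + 1), g r + q * ∑ r ∈ Finset.range N, f r := by
            rw [Finset.sum_add_distrib, ← Finset.mul_sum, Finset.sum_range_succ' g]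
            ring
          _ ≤ (∑' r, g r) + q * ∑ r ∈ Finset.range (N + 1), f r := by
            gcongr
            · exact hg.sum_le_tsum _ fun r _ => hg0 r
            · omega
    refine summable_of_sum_range_le hf0 (c := (∑' r, g r) / (1 - q)) fun N => ?_
    rw [le_div_iff₀ (by linarith)]
    linarith [hpartial N]

theorem summable_completeHomogeneous_series [CompleteSpace R] (hx : ∀ i j, Commute (x i) (x j))
    {d : 𝕜} (s : Finset ι) (hs : ∀ i ∈ s, ‖x i‖ < ‖d‖) (m : ℕ) :
    Summable fun r => ((-1) ^ r / d ^ (m + r)) • completeHomogeneous x s r := by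
  have hnorm := summable_norm_completeHomogeneous_mul_pow hx (inv_nonneg.mpr (norm_nonneg d)) s
    fun i hi => by
      rw [← div_eq_mul_inv, div_lt_one ((norm_nonneg _).trans_lt (hs i hi))]
      exact hs i hi
  refine Summable.of_norm_bounded (hnorm.mul_left (‖d‖⁻¹ ^ m)) fun r => le_of_eq ?_
  rw [norm_smul, norm_div, norm_pow, norm_pow, norm_neg, norm_one, one_pow, pow_add, inv_pow,
    inv_pow]
  field_simp

theorem list_prod_mul_tsum_eq_one [CompleteSpace R] (hx : ∀ i j, Commute (x i) (x j)) {d : 𝕜}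
    (l : List ι) (hl : l.Nodup) (hxd : ∀ i ∈ l, ‖x i‖ < ‖d‖) :
    (l.map fun i => d • 1 + x i).prod *
      ∑' r, ((-1) ^ r / d ^ (l.length + r)) • completeHomogeneous x l.toFinset r = 1 := by
  induction l with
  | nil =>
    rw [List.map_nil, List.prod_nil, one_mul, tsum_eq_single 0 fun r hr => ?_]
    · simp
    · obtain ⟨r, rfl⟩ := Nat.exists_eq_succ_of_ne_zero hr
      simp
  | cons a l ih =>
    obtain ⟨ha, hl⟩ := List.nodup_cons.mp hl
    have hd : d ≠ 0 := norm_pos_iff.mp ((norm_nonneg _).trans_lt (hxd a List.mem_cons_self))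
    have hstep := hasSum_completeHomogeneous_of_insert hx (List.mem_toFinset.not.mpr ha) hd
      (summable_completeHomogeneous_series hx _ (fun i hi => hxd i (by simpa using hi))
        (l.length + 1)).hasSum
    have hcomm : Commute (d • 1 + x a) (l.map fun i => d • 1 + x i).prod :=
      .list_prod_right _ _ fun y hy => by
        obtain ⟨i, -, rfl⟩ := List.mem_map.mp hy
        exact (hx i a).smul_one_add_left.symm.smul_one_add_left
    rw [List.map_cons, List.prod_cons, hcomm.eq, mul_assoc, List.toFinset_cons, List.length_cons,
      ← hstep.tsum_eq]
    exact ih hl fun i hi => hxd i (List.mem_cons_of_mem a hi)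

theorem hasSum_completeHomogeneous_ringInverse [CompleteSpace R]
    (hx : ∀ i j, Commute (x i) (x j)) {d : 𝕜} (l : List ι) (hl : l.Nodup)
    (hxd : ∀ i ∈ l, ‖x i‖ < ‖d‖) :
    HasSum (fun r => ((-1) ^ r / d ^ (l.length + r)) • completeHomogeneous x l.toFinset r)
      (Ring.inverse (l.map fun i => d • 1 + x i).prod) := by
  set P := (l.map fun i => d • 1 + x i).prod
  have hsum := summable_completeHomogeneous_series hx l.toFinset
    (fun i hi => hxd i (List.mem_toFinset.mp hi)) l.length
  have hPT := list_prod_mul_tsum_eq_one hx l hl hxd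
  have hcomm : Commute P
      (∑' r, ((-1) ^ r / d ^ (l.length + r)) • completeHomogeneous x l.toFinset r) :=
    .tsum_right _ fun r => .smul_right (commute_completeHomogeneous (fun j => .list_prod_left _ _
      fun y hy => by
        obtain ⟨i, -, rfl⟩ := List.mem_map.mp hy
        exact (hx i j).smul_one_add_left) _ _) _
  rw [Ring.inverse_unit ⟨P, _, hPT, hcomm.eq ▸ hPT⟩]
  exact hsum.hasSum

end Expansion

section JucysMurphy

variable {n : ℕ}

theorem jm_mul_comm_of_lt {i j : Fin n} (hij : i < j) : jm n i * jm n j = jm n j * jm n i := by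
  simp only [jm, Finset.sum_mul_sum, MonoidAlgebra.of_apply, MonoidAlgebra.single_mul_single,
    one_mul]
  rw [Finset.sum_comm (s := Finset.univ.filter (· < j))]
  refine Finset.sum_congr rfl fun k hk => ?_
  have hki : k < i := (Finset.mem_filter.mp hk).2
  -- conjugating by `(k i)` permutes the transpositions `(l j)` with `l < j`
  refine Finset.sum_equiv (Equiv.swap k i) (fun l => ?_) fun l _ => ?_
  · simp only [Finset.mem_filter, Finset.mem_univ, true_and, Equiv.swap_apply_def]
    split_ifs <;> subst_vars <;> simp [hij, hki.trans hij]
  · have hconj := Equiv.swap_apply_apply (Equiv.swap k i) l j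
    rw [Equiv.swap_apply_of_ne_of_ne (hki.trans hij).ne' hij.ne'] at hconj
    rw [hconj, inv_mul_cancel_right]

theorem jm_commute (i j : Fin n) : Commute (jm n i) (jm n j) := by
  rcases lt_trichotomy i j with h | rfl | h
  · exact jm_mul_comm_of_lt h
  · exact Commute.refl _
  · exact (jm_mul_comm_of_lt h).symm

theorem norm_jm_le (i : Fin n) : ‖jm n i‖ ≤ i := by
  refine (norm_sum_le _ _).trans ?_
  simp [MonoidAlgebra.norm_single_one, Finset.filter_gt_eq_Iio]

theorem hJM_eq_completeHomogeneous (r : ℕ) :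
    hJM n r = completeHomogeneous (jm n) Finset.univ r := by
  rw [hJM, completeHomogeneous, Finset.sym_univ]

end JucysMurphy

theorem weingarten_asymptotic_expansion_general (n : ℕ) (d : ℕ) (hd : n ≤ d)
    (σ : Equiv.Perm (Fin n)) :
    HasSum (fun r : ℕ => ((-1 : ℂ) ^ r * (hJM n r).coeff σ) / (d : ℂ) ^ (n + r))
      ((Ring.inverse (prodDJ n d)).coeff σ) := by
  have hjm_lt (i : Fin n) (_ : i ∈ List.finRange n) : ‖jm n i‖ < ‖(d : ℂ)‖ := by
    rw [Complex.norm_natCast]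
    exact (norm_jm_le i).trans_lt (mod_cast i.is_lt.trans_le hd)
  have h := MonoidAlgebra.hasSum_coeff
    (hasSum_completeHomogeneous_ringInverse jm_commute _ (List.nodup_finRange n) hjm_lt) σ
  rw [List.toFinset_finRange, List.length_finRange] at h
  have hterm (r : ℕ) :
      (((-1) ^ r / (d : ℂ) ^ (n + r)) • completeHomogeneous (jm n) .univ r).coeff σ =
        ((-1) ^ r * (hJM n r).coeff σ) / (d : ℂ) ^ (n + r) := by
    rw [hJM_eq_completeHomogeneous, MonoidAlgebra.coeff_smul_apply, smul_eq_mul]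
    ring
  simp only [hterm] at h
  exact h

/-- For every integer `d ≥ n` and `σ ∈ S_n`, the series
`Σ_{r≥0} (−1)^r h_r(J_1,…,J_n)(σ) / d^{n+r}` converges to the coefficient of `σ` in
`(∏_{i=1}^n (d·1 + J_i))⁻¹`; i.e. the coefficients of the `1/d`-expansion of the
Weingarten function are `a_r = (−1)^r h_r(J_1,…,J_n)`. -/
theorem weingarten_asymptotic_expansion (n : ℕ) (hn : 1 ≤ n) (d : ℕ) (hd : n ≤ d)
    (σ : Equiv.Perm (Fin n)) :
    HasSum (fun r : ℕ => ((-1 : ℂ) ^ r * (hJM n r).coeff σ) / (d : ℂ) ^ (n + r))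
      ((Ring.inverse (prodDJ n d)).coeff σ) :=
  weingarten_asymptotic_expansion_general n d hd σ
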